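/- Let X be a metric space with an accumulation point. Then there exists a sequence x : ω → X such that Λ_x(FS) is not a closed subset of X. -/

import Mathlib

open Set Filter Topology

/-- `FS(D)`: the set of finite sums of distinct elements of `D`. -/
def FS (D : Set ℕ) : Set ℕ :=
  {n | ∃ α : Finset ℕ, ↑α ⊆ D ∧ α.Nonempty ∧ ∑ i ∈ α, i = n}

variable {X : Type*}

/-- `η` is an `FS`-limit point of the sequence `x : ω → X`. -/
def IsFSLimitPoint [TopologicalSpace X] (x : ℕ → X) (η : X) : Prop :=
  ∃ D : Set ℕ, D.Infinite ∧ ∀ U ∈ 𝓝 η, ∃ K : Set ℕ, K.Finite ∧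
    ∀ n ∈ FS (D \ K), x n ∈ U

/-- `η` is an `FS`-cluster point of the sequence `x : ω → X`. -/
def IsFSClusterPoint [TopologicalSpace X] (x : ℕ → X) (η : X) : Prop :=
  ∀ U ∈ 𝓝 η, ∃ D : Set ℕ, D.Infinite ∧ FS D ⊆ {n | x n ∈ U}

/-!
Split the bit positions into the infinitely many infinite blocks `{j | (Nat.unpair j).1 = k}`.
Colour `n` by `k + 1` when its lowest and its highest binary digit both lie in block `k`, and by
`0` otherwise, and put `x n = y (colour n)` for points `y c ≠ p` converging to an accumulation
point `p`. Sums of distinct powers `2 ^ j` with `j` in block `k` have colour `k + 1`, so each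
`y (k + 1)` is an FS-limit point and `p` lies in the closure of `Λ_x(FS)`. Yet `p` is not an
FS-limit point: given an infinite `D`, either the colour is bounded on infinitely many elements
of `D`, or it tends to infinity along `D`; then for `a ∈ D` there is `b ∈ D` with `2 ^ a ∣ b` whose
highest digit lies outside the block of the lowest digit of `a`, and `a + b`, which keeps both of
these digits, has colour `0`.
-/

lemma mem_FS_of_mem {A : Set ℕ} {a : ℕ} (ha : a ∈ A) : a ∈ FS A :=
  ⟨{a}, by simpa using ha, Finset.singleton_nonempty a, Finset.sum_singleton _ _⟩

lemma add_mem_FS {A : Set ℕ} {a b : ℕ} (ha : a ∈ A) (hb : b ∈ A) (hab : a ≠ b) :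
    a + b ∈ FS A :=
  ⟨{a, b}, by simp [Set.insert_subset_iff, ha, hb], Finset.insert_nonempty _ _,
    Finset.sum_pair hab⟩

lemma padicValNat_add_of_lt_of_dvd {p a b e : ℕ} [Fact p.Prime] (ha : a ≠ 0) (hae : a < p ^ e)
    (hb : p ^ e ∣ b) : padicValNat p (a + b) = padicValNat p a := by
  have hp : 1 < p := Fact.out (p := p.Prime) |>.one_lt
  have hlt : padicValNat p a < e :=
    (Nat.pow_lt_pow_iff_right hp).1 ((Nat.le_of_dvd (by omega) pow_padicValNat_dvd).trans_lt hae)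
  have hb' : p ^ (padicValNat p a + 1) ∣ b := (pow_dvd_pow p hlt).trans hb
  apply le_antisymm
  · by_contra! hgt
    have : p ^ (padicValNat p a + 1) ∣ a + b :=
      (pow_dvd_pow p hgt).trans pow_padicValNat_dvd
    exact pow_succ_padicValNat_not_dvd ha ((Nat.dvd_add_left hb').1 this)
  · exact (padicValNat_dvd_iff_le (by omega)).1
      (dvd_add pow_padicValNat_dvd ((pow_dvd_pow p hlt.le).trans hb))

lemma Nat.log_add_of_lt_of_dvd {p a b e : ℕ} (hp : 1 < p) (hb0 : b ≠ 0) (hae : a < p ^ e)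
    (hb : p ^ e ∣ b) : Nat.log p (a + b) = Nat.log p b := by
  set L := Nat.log p b
  have hbL : b < p ^ (L + 1) := Nat.lt_pow_succ_log_self hp b
  have heL : e ≤ L + 1 :=
    (Nat.pow_le_pow_iff_right hp).1 ((Nat.le_of_dvd (by omega) hb).trans hbL.le)
  have hgap : p ^ e ∣ p ^ (L + 1) - b := Nat.dvd_sub (pow_dvd_pow p heL) hb
  have := Nat.le_of_dvd (by omega) hgap
  exact Nat.log_eq_of_pow_le_of_lt_pow ((Nat.pow_log_le_self p hb0).trans (by omega)) (by omega)

lemma padicValNat_two_sum_two_pow {s : Finset ℕ} (hs : s.Nonempty) :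
    padicValNat 2 (∑ i ∈ s, 2 ^ i) = s.min' hs := by
  classical
  set m := s.min' hs
  rw [← Finset.add_sum_erase s _ (s.min'_mem hs),
    padicValNat_add_of_lt_of_dvd (e := m + 1) (by positivity)
      (Nat.pow_lt_pow_right one_lt_two m.lt_succ_self),
    padicValNat.prime_pow]
  refine Finset.dvd_sum fun i hi => pow_dvd_pow 2 ?_
  exact lt_of_le_of_ne (s.min'_le i (Finset.mem_of_mem_erase hi)) (Finset.ne_of_mem_erase hi).symm

lemma Nat.log_two_sum_two_pow {s : Finset ℕ} (hs : s.Nonempty) :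
    Nat.log 2 (∑ i ∈ s, 2 ^ i) = s.max' hs :=
  Nat.log_eq_of_pow_le_of_lt_pow
    (Finset.single_le_sum (fun _ _ => Nat.zero_le _) (s.max'_mem hs))
    (Nat.geomSum_lt le_rfl fun i hi => Nat.lt_succ_of_le (s.le_max' i hi))

def bitBlock (j : ℕ) : ℕ := (Nat.unpair j).1

def fsColor (n : ℕ) : ℕ :=
  if bitBlock (padicValNat 2 n) = bitBlock (Nat.log 2 n) then bitBlock (padicValNat 2 n) + 1
  else 0

def blockPowers (k : ℕ) : Set ℕ := (2 ^ ·) '' {j | bitBlock j = k}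

lemma infinite_blockPowers (k : ℕ) : (blockPowers k).Infinite := by
  refine Set.Infinite.image (Nat.pow_right_injective le_rfl).injOn ?_
  exact Set.infinite_of_injective_forall_mem (f := Nat.pair k)
    (fun _ _ h => (Nat.pair_eq_pair.1 h).2) fun m => by simp [bitBlock]

lemma fsColor_eq_of_mem_FS_blockPowers {k n : ℕ} (hn : n ∈ FS (blockPowers k)) :
    fsColor n = k + 1 := by
  classical
  obtain ⟨α, hα, hne, rfl⟩ := hn
  obtain ⟨s, hs, rfl⟩ := Finset.subset_set_image_iff.1 hα
  have hs' : s.Nonempty := Finset.image_nonempty.1 hne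
  rw [Finset.sum_image fun _ _ _ _ h => Nat.pow_right_injective le_rfl h]
  have hmin : bitBlock (s.min' hs') = k := hs (s.min'_mem hs')
  have hmax : bitBlock (s.max' hs') = k := hs (s.max'_mem hs')
  rw [fsColor, padicValNat_two_sum_two_pow hs', Nat.log_two_sum_two_pow hs', hmin, hmax, if_pos rfl]

lemma fsColor_le_padicValNat_add_one (n : ℕ) : fsColor n ≤ padicValNat 2 n + 1 := by
  unfold fsColor
  split_ifs
  · exact Nat.succ_le_succ (Nat.unpair_left_le _)
  · exact Nat.zero_le _

lemma fsColor_le_bitBlock_log_add_one (n : ℕ) : fsColor n ≤ bitBlock (Nat.log 2 n) + 1 := by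
  unfold fsColor
  split_ifs with h
  · rw [h]
  · exact Nat.zero_le _

lemma fsColor_add_eq_zero {a b e : ℕ} (ha : a ≠ 0) (hb0 : b ≠ 0) (hae : a < 2 ^ e)
    (hb : 2 ^ e ∣ b) (hblock : bitBlock (padicValNat 2 a) ≠ bitBlock (Nat.log 2 b)) :
    fsColor (a + b) = 0 := by
  rw [fsColor, padicValNat_add_of_lt_of_dvd ha hae hb,
    Nat.log_add_of_lt_of_dvd one_lt_two hb0 hae hb, if_neg hblock]

lemma exists_mem_FS_fsColor_eq_zero {D K : Set ℕ} (hD : D.Infinite)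
    (hcolor : ∀ N, {d ∈ D | fsColor d ≤ N}.Finite) (hK : K.Finite) :
    ∃ n ∈ FS (D \ K), fsColor n = 0 := by
  obtain ⟨a, ⟨haD, haK⟩, ha0⟩ := ((hD.sdiff hK).sdiff (finite_singleton 0)).nonempty
  rw [mem_singleton_iff] at ha0
  -- A colour above `a + bitBlock (padicValNat 2 a)` forces `2 ^ a ∣ b` and puts the highest digit
  -- of `b` outside the block of the lowest digit of `a`.
  obtain ⟨b, ⟨hbD, hbK⟩, hbN⟩ :=
    ((hD.sdiff hK).sdiff (hcolor (a + bitBlock (padicValNat 2 a)))).nonempty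
  have hbN : a + bitBlock (padicValNat 2 a) < fsColor b := lt_of_not_ge fun h => hbN ⟨hbD, h⟩
  have hab : a ≤ padicValNat 2 b := by
    have := fsColor_le_padicValNat_add_one b
    omega
  have hb0 : b ≠ 0 := by
    rintro rfl
    simp only [padicValNat_zero_right, nonpos_iff_eq_zero] at hab
    exact ha0 hab
  have hae : a < 2 ^ a := Nat.lt_two_pow_self
  have hb : 2 ^ a ∣ b := (pow_dvd_pow 2 hab).trans pow_padicValNat_dvd
  refine ⟨a + b, add_mem_FS ⟨haD, haK⟩ ⟨hbD, hbK⟩ (hae.trans_le (Nat.le_of_dvd ?_ hb)).ne,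
    fsColor_add_eq_zero ha0 hb0 hae hb fun h => ?_⟩
  · omega
  · have := fsColor_le_bitBlock_log_add_one b
    omega

lemma exists_bound_fsColor {D : Set ℕ} (hD : D.Infinite) :
    ∃ N, ∀ K : Set ℕ, K.Finite → ∃ n ∈ FS (D \ K), fsColor n ≤ N := by
  by_cases h : ∃ N, {d ∈ D | fsColor d ≤ N}.Infinite
  · obtain ⟨N, hN⟩ := h
    refine ⟨N, fun K hK => ?_⟩
    obtain ⟨d, ⟨hdD, hdN⟩, hdK⟩ := (hN.sdiff hK).nonempty
    exact ⟨d, mem_FS_of_mem ⟨hdD, hdK⟩, hdN⟩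
  · push Not at h
    exact ⟨0, fun K hK =>
      (exists_mem_FS_fsColor_eq_zero hD h hK).imp fun _ => And.imp_right le_of_eq⟩

lemma isFSLimitPoint_of_eq_on_FS [TopologicalSpace X] {x : ℕ → X} {η : X} {D : Set ℕ}
    (hD : D.Infinite) (hx : ∀ n ∈ FS D, x n = η) : IsFSLimitPoint x η :=
  ⟨D, hD, fun U hU => ⟨∅, finite_empty, fun n hn => by
    rw [sdiff_empty] at hn
    exact hx n hn ▸ mem_of_mem_nhds hU⟩⟩

lemma not_isFSLimitPoint_comp [TopologicalSpace X] [T1Space X] {y : ℕ → X} {p : X}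
    (hy : ∀ k, y k ≠ p) {c : ℕ → ℕ}
    (hc : ∀ D : Set ℕ, D.Infinite → ∃ N, ∀ K : Set ℕ, K.Finite → ∃ n ∈ FS (D \ K), c n ≤ N) :
    ¬ IsFSLimitPoint (y ∘ c) p := by
  rintro ⟨D, hD, hlim⟩
  obtain ⟨N, hN⟩ := hc D hD
  have hU : (y '' Iic N)ᶜ ∈ 𝓝 p :=
    ((finite_Iic N).image y).isClosed.compl_mem_nhds fun ⟨k, _, hk⟩ => hy k hk
  obtain ⟨K, hK, hKU⟩ := hlim _ hU
  obtain ⟨n, hn, hcn⟩ := hN K hK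
  exact hKU n hn ⟨c n, hcn, rfl⟩

lemma exists_seq_ne_tendsto [TopologicalSpace X] [FirstCountableTopology X] {p : X}
    (hp : (𝓝[≠] p).NeBot) : ∃ y : ℕ → X, (∀ n, y n ≠ p) ∧ Tendsto y atTop (𝓝 p) := by
  obtain ⟨y, hy⟩ := (𝓝[≠] p).exists_seq_tendsto
  obtain ⟨hyp, hne⟩ := tendsto_nhdsWithin_iff.1 hy
  obtain ⟨M, hM⟩ := eventually_atTop.1 hne
  exact ⟨fun n => y (n + M), fun n => hM _ (Nat.le_add_left M n),
    (tendsto_add_atTop_iff_nat M).2 hyp⟩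

theorem exists_seq_lambda_fs_not_closed
    [MetricSpace X] (hacc : ∃ p : X, (𝓝[≠] p).NeBot) :
    ∃ x : ℕ → X, ¬ IsClosed {η | IsFSLimitPoint x η} := by
  obtain ⟨p, hp⟩ := hacc
  obtain ⟨y, hyp, hy⟩ := exists_seq_ne_tendsto hp
  refine ⟨y ∘ fsColor, fun hclosed => not_isFSLimitPoint_comp hyp
    (fun _ => exists_bound_fsColor) (hclosed.closure_subset ?_)⟩
  have hmem : ∀ k, IsFSLimitPoint (y ∘ fsColor) (y (k + 1)) := fun k =>
    isFSLimitPoint_of_eq_on_FS (infinite_blockPowers k) fun _ hn =>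
      congrArg y (fsColor_eq_of_mem_FS_blockPowers hn)
  exact mem_closure_of_tendsto ((tendsto_add_atTop_iff_nat 1).2 hy) (Eventually.of_forall hmem)
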